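/- For every coherent lower expectation E on X, there is at least one path ω that is computably random for E. -/

import Mathlib

open Filter

/-- A coherent lower expectation on a nonempty finite sample space `X`. -/
def IsCoherent {X : Type} [Fintype X] [Nonempty X] (E : (X → ℝ) → ℝ) : Prop :=
  (∀ f : X → ℝ, Finset.univ.inf' Finset.univ_nonempty f ≤ E f) ∧
  (∀ (f : X → ℝ) (α : ℝ), 0 ≤ α → E (fun x => α * f x) = α * E f) ∧
  (∀ f g : X → ℝ, E f + E g ≤ E (fun x => f x + g x))

/-- The conjugate upper expectation. -/
noncomputable def upperE {X : Type} (E : (X → ℝ) → ℝ) (f : X → ℝ) : ℝ :=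
  -E (fun x => -f x)

/-- The process difference `ΔF(s)(x) = F(sx) − F(s)`. -/
noncomputable def procDiff {X : Type} (F : List X → ℝ) (s : List X) : X → ℝ :=
  fun x => F (s ++ [x]) - F s

/-- `M` is a supermartingale for the forecasting system `Φ`. -/
def IsSupermartingale {X : Type} (Φ : List X → (X → ℝ) → ℝ) (M : List X → ℝ) : Prop :=
  ∀ s : List X, upperE (Φ s) (procDiff M s) ≤ 0

/-- A real process is computable if some recursive net of rationals converges
effectively to it. -/
def ComputableProcess {X : Type} [Primcodable X] (F : List X → ℝ) : Prop :=
  ∃ r : List X × ℕ → ℚ, Computable r ∧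
    ∀ (s : List X) (n N : ℕ), N ≤ n → |(r (s, n) : ℝ) - F s| ≤ (2 : ℝ) ^ (-(N : ℤ))

/-- The length-`n` prefix `ω^n` of a path `ω`. -/
def prefixOf {X : Type} (ω : ℕ → X) (n : ℕ) : List X := (List.range n).map ω

/-- A path `ω` is computably random for the forecasting system `Φ` if every
computable nonnegative supermartingale for `Φ` is bounded above along `ω`. -/
def ComputablyRandom {X : Type} [Fintype X] [Nonempty X] [Primcodable X]
    (Φ : List X → (X → ℝ) → ℝ) (ω : ℕ → X) : Prop :=
  ∀ M : List X → ℝ, ComputableProcess M → (∀ s, 0 ≤ M s) →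
    IsSupermartingale Φ M → BddAbove (Set.range fun n => M (prefixOf ω n))

/-- A computable real number. -/
def ComputableReal (x : ℝ) : Prop :=
  ∃ r : ℕ → ℚ, Computable r ∧ ∀ n : ℕ, |(r n : ℝ) - x| ≤ (2 : ℝ) ^ (-(n : ℤ))

/-! Computable nets of rationals are countable, hence so are the computable nonnegative
supermartingales `Mₖ`. The partial sums of `∑ₖ 2⁻ᵏ Mₖ / (1 + Mₖ □)` are supermartingales
bounded by `2` at `□`, and coherence lets any supermartingale be kept from increasing by
choosing each next outcome well. So every partial sum stays below `2` along some path; these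
sets of paths are closed and decreasing in the compact space `X^ℕ`, so a single path keeps all
partial sums below `2`, and along it each `Mₖ` is bounded by `2ᵏ⁺¹ (1 + Mₖ □)`. -/

open Topology

namespace IsCoherent

variable {X : Type} [Fintype X] [Nonempty X] {E : (X → ℝ) → ℝ}

theorem map_zero (hE : IsCoherent E) : E (fun _ => 0) = 0 := by
  simpa using hE.2.1 (fun _ => 0) 0 le_rfl

theorem le_upperE (hE : IsCoherent E) (f : X → ℝ) : E f ≤ upperE E f := by
  have h := hE.2.2 f (fun x => -f x)
  simp only [add_neg_cancel, hE.map_zero] at h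
  unfold upperE
  linarith

theorem upperE_zero (hE : IsCoherent E) : upperE E (fun _ => 0) = 0 := by
  simp [upperE, hE.map_zero]

theorem upperE_add_le (hE : IsCoherent E) (f g : X → ℝ) :
    upperE E (fun x => f x + g x) ≤ upperE E f + upperE E g := by
  have h := hE.2.2 (fun x => -f x) (fun x => -g x)
  simp only [← neg_add] at h
  unfold upperE
  linarith

theorem upperE_const_mul (hE : IsCoherent E) (f : X → ℝ) {c : ℝ} (hc : 0 ≤ c) :
    upperE E (fun x => c * f x) = c * upperE E f := by
  have h := hE.2.1 (fun x => -f x) c hc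
  simp only [mul_neg] at h
  simp [upperE, h]

theorem exists_le_of_upperE_nonpos (hE : IsCoherent E) {f : X → ℝ} (hf : upperE E f ≤ 0) :
    ∃ x, f x ≤ 0 := by
  obtain ⟨x, -, hx⟩ := Finset.exists_mem_eq_inf' Finset.univ_nonempty f
  exact ⟨x, hx ▸ (hE.1 f).trans ((hE.le_upperE f).trans hf)⟩

end IsCoherent

theorem prefixOf_succ {X : Type} (ω : ℕ → X) (m : ℕ) :
    prefixOf ω (m + 1) = prefixOf ω m ++ [ω m] := by
  simp [prefixOf, List.range_succ]

theorem prefixOf_eq_ofFn {X : Type} (ω : ℕ → X) (m : ℕ) :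
    prefixOf ω m = List.ofFn fun i : Fin m => ω i := by
  rw [prefixOf, List.ofFn_eq_map, ← List.map_coe_finRange_eq_range, List.map_map]
  rfl

theorem exists_path_le_of_forall_exists_le {X : Type} {T : List X → ℝ}
    (h : ∀ s, ∃ x, T (s ++ [x]) ≤ T s) : ∃ ω : ℕ → X, ∀ m, T (prefixOf ω m) ≤ T [] := by
  choose g hg using h
  let p : ℕ → List X := fun m => Nat.rec [] (fun _ s => s ++ [g s]) m
  have hp : ∀ m, prefixOf (fun n => g (p n)) m = p m := by
    intro m
    induction m with
    | zero => rfl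
    | succ m ih => rw [prefixOf_succ, ih]
  refine ⟨fun n => g (p n), fun m => ?_⟩
  have hanti : Antitone fun m => T (prefixOf (fun n => g (p n)) m) :=
    antitone_nat_of_succ_le fun m => by rw [hp, hp]; exact hg (p m)
  exact hanti (Nat.zero_le m)

namespace IsSupermartingale

variable {X : Type} [Fintype X] [Nonempty X] {Φ : List X → (X → ℝ) → ℝ}

theorem zero (hΦ : ∀ s, IsCoherent (Φ s)) : IsSupermartingale Φ fun _ => 0 := fun s => by
  unfold procDiff
  simpa using (hΦ s).upperE_zero.le

theorem add (hΦ : ∀ s, IsCoherent (Φ s)) {M N : List X → ℝ} (hM : IsSupermartingale Φ M)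
    (hN : IsSupermartingale Φ N) : IsSupermartingale Φ fun s => M s + N s := fun s => by
  have hd : procDiff (fun s => M s + N s) s = fun x => procDiff M s x + procDiff N s x := by
    funext x; simp only [procDiff]; ring
  rw [hd]
  linarith [(hΦ s).upperE_add_le (procDiff M s) (procDiff N s), hM s, hN s]

theorem const_mul (hΦ : ∀ s, IsCoherent (Φ s)) {M : List X → ℝ} (hM : IsSupermartingale Φ M)
    {c : ℝ} (hc : 0 ≤ c) : IsSupermartingale Φ fun s => c * M s := fun s => by
  have hd : procDiff (fun s => c * M s) s = fun x => c * procDiff M s x := by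
    funext x; simp only [procDiff]; ring
  rw [hd, (hΦ s).upperE_const_mul _ hc]
  exact mul_nonpos_of_nonneg_of_nonpos hc (hM s)

theorem sum (hΦ : ∀ s, IsCoherent (Φ s)) {M : ℕ → List X → ℝ}
    (hM : ∀ k, IsSupermartingale Φ (M k)) (n : ℕ) :
    IsSupermartingale Φ fun s => ∑ k ∈ Finset.range n, M k s := by
  induction n with
  | zero => simpa using zero hΦ
  | succ n ih => simpa [Finset.sum_range_succ] using ih.add hΦ (hM n)

theorem exists_path_le (hΦ : ∀ s, IsCoherent (Φ s)) {M : List X → ℝ}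
    (hM : IsSupermartingale Φ M) : ∃ ω : ℕ → X, ∀ m, M (prefixOf ω m) ≤ M [] :=
  exists_path_le_of_forall_exists_le fun s => by
    obtain ⟨x, hx⟩ := (hΦ s).exists_le_of_upperE_nonpos (hM s)
    exact ⟨x, sub_nonpos.1 hx⟩

end IsSupermartingale

theorem isClosed_setOf_prefixOf {X : Type} [TopologicalSpace X] [DiscreteTopology X]
    (P : List X → Prop) (m : ℕ) : IsClosed {ω : ℕ → X | P (prefixOf ω m)} := by
  simp only [prefixOf_eq_ofFn]
  exact IsClosed.preimage (f := fun (ω : ℕ → X) (i : Fin m) => ω i)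
    (continuous_pi fun i => continuous_apply _) (isClosed_discrete {v | P (List.ofFn v)})

theorem exists_path_forall_le_of_monotone {X : Type} [Finite X] {T : ℕ → List X → ℝ} {C : ℝ}
    (hT : Monotone T) (hpath : ∀ n, ∃ ω : ℕ → X, ∀ m, T n (prefixOf ω m) ≤ C) :
    ∃ ω : ℕ → X, ∀ n m, T n (prefixOf ω m) ≤ C := by
  let _ : TopologicalSpace X := ⊥
  have _ : DiscreteTopology X := ⟨rfl⟩
  let A : ℕ → Set (ℕ → X) := fun n => ⋂ m, {ω | T n (prefixOf ω m) ≤ C}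
  have hclosed : ∀ n, IsClosed (A n) := fun n =>
    isClosed_iInter fun m => isClosed_setOf_prefixOf (fun s => T n s ≤ C) m
  have hanti : ∀ n, A (n + 1) ⊆ A n := fun n =>
    Set.iInter_mono fun m ω (hω : T (n + 1) _ ≤ C) => (hT n.le_succ _).trans hω
  have hne : ∀ n, (A n).Nonempty := fun n =>
    (hpath n).imp fun ω hω => Set.mem_iInter.2 hω
  obtain ⟨ω, hω⟩ := (hclosed 0).isCompact.nonempty_iInter_of_sequence_nonempty_isCompact_isClosed
    A hanti hne hclosed
  exact ⟨ω, by simpa [A] using hω⟩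

theorem Set.countable_setOf_computable {α β : Type} [Primcodable α] [Primcodable β] :
    {f : α → β | Computable f}.Countable := by
  let code : (α → β) → ℕ → ℕ := fun f n => Encodable.encode ((Encodable.decode (α := α) n).map f)
  have hcode : ∀ f : α → β, Computable f → Computable (code f) := fun f hf =>
    Computable.encode.comp (Computable.decode.option_map (hf.comp Computable.snd))
  have hinj : Function.Injective code := fun f g h => funext fun a => by
    simpa [code, Encodable.encodek] using congrFun h (Encodable.encode a)
  exact Function.Injective.countable (f := fun f : {f : α → β // Computable f} =>
    (⟨code f.1, hcode f.1 f.2⟩ : {g : ℕ → ℕ // Computable g}))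
    fun f g h => Subtype.ext (hinj (congrArg Subtype.val h))

theorem Set.countable_setOf_computableProcess {X : Type} [Primcodable X] :
    {M : List X → ℝ | ComputableProcess M}.Countable := by
  refine (Set.countable_setOf_computable.image
    fun r s => limUnder atTop fun n : ℕ => ((r (s, n) : ℚ) : ℝ)).mono ?_
  rintro M ⟨r, hr, hr_approx⟩
  refine ⟨r, hr, funext fun s => (tendsto_iff_norm_sub_tendsto_zero.2 ?_).limUnder_eq⟩
  have h2 : Tendsto (fun n : ℕ => (2 : ℝ) ^ (-(n : ℤ))) atTop (𝓝 0) := by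
    simpa [zpow_neg, ← inv_pow] using
      tendsto_pow_atTop_nhds_zero_of_lt_one (r := (2 : ℝ)⁻¹) (by norm_num) (by norm_num)
  exact squeeze_zero (fun _ => norm_nonneg _) (fun n => hr_approx s n n le_rfl) h2

theorem IsSupermartingale.exists_path_forall_bddAbove {X : Type} [Fintype X] [Nonempty X]
    {Φ : List X → (X → ℝ) → ℝ} (hΦ : ∀ s, IsCoherent (Φ s)) {M : ℕ → List X → ℝ}
    (hM_nonneg : ∀ k s, 0 ≤ M k s) (hM : ∀ k, IsSupermartingale Φ (M k)) :
    ∃ ω : ℕ → X, ∀ k, BddAbove (Set.range fun m => M k (prefixOf ω m)) := by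
  set c : ℕ → ℝ := fun k => (1 / 2) ^ k / (1 + M k [])
  have hc : ∀ k, 0 < c k := fun k => div_pos (by positivity) (by linarith [hM_nonneg k []])
  set T : ℕ → List X → ℝ := fun n s => ∑ k ∈ Finset.range n, c k * M k s
  have hT_mono : Monotone T := monotone_nat_of_le_succ fun n s => by
    simpa [T, Finset.sum_range_succ] using mul_nonneg (hc n).le (hM_nonneg n s)
  have hT_root : ∀ n, T n [] ≤ 2 := fun n => calc
    T n [] ≤ ∑ k ∈ Finset.range n, (1 / 2 : ℝ) ^ k := Finset.sum_le_sum fun k _ => by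
      have h1 : 0 < 1 + M k [] := by linarith [hM_nonneg k []]
      rw [div_mul_eq_mul_div, div_le_iff₀ h1]
      nlinarith [pow_pos (by norm_num : (0 : ℝ) < 1 / 2) k]
    _ ≤ 2 := sum_geometric_two_le n
  have hT : ∀ n, IsSupermartingale Φ (T n) :=
    IsSupermartingale.sum hΦ fun k => (hM k).const_mul hΦ (hc k).le
  obtain ⟨ω, hω⟩ := exists_path_forall_le_of_monotone hT_mono fun n =>
    ((hT n).exists_path_le hΦ).imp fun ω hω m => (hω m).trans (hT_root n)
  refine ⟨ω, fun k => ⟨2 / c k, ?_⟩⟩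
  rintro _ ⟨m, rfl⟩
  have hterm : c k * M k (prefixOf ω m) ≤ T (k + 1) (prefixOf ω m) :=
    Finset.single_le_sum (f := fun j => c j * M j (prefixOf ω m))
      (fun j _ => mul_nonneg (hc j).le (hM_nonneg j _)) (Finset.self_mem_range_succ k)
  rw [le_div_iff₀ (hc k), mul_comm]
  exact hterm.trans (hω (k + 1) m)

/-- Every coherent lower expectation has at least one computably
random path (w.r.t. the associated stationary forecasting system). -/
theorem stmt_5 {X : Type} [Fintype X] [Nonempty X] [Primcodable X]
    (E : (X → ℝ) → ℝ) (hE : IsCoherent E) :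
    ∃ ω : ℕ → X, ComputablyRandom (fun _ : List X => E) ω := by
  set 𝒮 : Set (List X → ℝ) :=
    {M | ComputableProcess M ∧ (∀ s, 0 ≤ M s) ∧ IsSupermartingale (fun _ => E) M}
  have h𝒮 : 𝒮.Countable := Set.countable_setOf_computableProcess.mono fun _ hM => hM.1
  have hzero : (fun _ => 0) ∈ 𝒮 :=
    ⟨⟨fun _ => 0, Computable.const 0, by simp⟩, fun _ => le_rfl,
      IsSupermartingale.zero fun _ => hE⟩
  obtain ⟨M, hM⟩ := h𝒮.exists_eq_range ⟨_, hzero⟩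
  have hM_mem : ∀ k, M k ∈ 𝒮 := fun k => hM ▸ Set.mem_range_self k
  obtain ⟨ω, hω⟩ := IsSupermartingale.exists_path_forall_bddAbove (fun _ => hE)
    (fun k => (hM_mem k).2.1) (fun k => (hM_mem k).2.2)
  refine ⟨ω, fun N hN_comp hN_nonneg hN => ?_⟩
  obtain ⟨k, rfl⟩ : N ∈ Set.range M := hM ▸ ⟨hN_comp, hN_nonneg, hN⟩
  exact hω k
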